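/- Let R be a commutative ring with unity and I_1, I_2 ⊆ R a pair of co-maximal ideals. Let A, B, C, D ∈ R be such that either (A)+I_1 = R or (B)+I_1 = R, and either (C)+I_2 = R or (D)+I_2 = R. Then there exists a matrix [[a,b],[c,d]] ∈ SL_2(R) such that a ≡ A mod I_1, b ≡ B mod I_1, c ≡ C mod I_2 and d ≡ D mod I_2. -/
import Mathlib

private lemma crt2 {R : Type*} [CommRing R] (I J : Ideal R) (h : I + J = ⊤) (x y : R) :
    ∃ z : R, z - x ∈ I ∧ z - y ∈ J := by
  have h1 : (1 : R) ∈ I + J := by rw [h]; trivial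
  rw [Submodule.add_eq_sup, Submodule.mem_sup] at h1
  obtain ⟨i, hi, j, hj, hij⟩ := h1
  refine ⟨y * i + x * j, ?_, ?_⟩
  · have hx : y * i + x * j - x = (y - x) * i := by linear_combination (x : R) * hij
    rw [hx]; exact I.mul_mem_left _ hi
  · have hy : y * i + x * j - y = (x - y) * j := by linear_combination (y : R) * hij
    rw [hy]; exact J.mul_mem_left _ hj

private lemma unit_of_span {R : Type*} [CommRing R] {A : R} {I : Ideal R}
    (h : Ideal.span {A} + I = ⊤) : ∃ u : R, A * u - 1 ∈ I := by
  have h1 : (1 : R) ∈ Ideal.span {A} + I := by rw [h]; trivial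
  rw [Submodule.add_eq_sup, Submodule.mem_sup] at h1
  obtain ⟨y, hy, z, hz, hyz⟩ := h1
  rw [Ideal.mem_span_singleton'] at hy
  obtain ⟨u, hu⟩ := hy
  refine ⟨u, ?_⟩
  have : A * u - 1 = -z := by linear_combination hu + hyz
  rw [this]; exact neg_mem hz

private lemma span_top_of {R : Type*} [CommRing R] {a : R} {I : Ideal R} (w : R)
    (h : a * w - 1 ∈ I) : Ideal.span {a} + I = ⊤ := by
  rw [Ideal.eq_top_iff_one, Submodule.add_eq_sup, Submodule.mem_sup]
  refine ⟨w * a, Ideal.mem_span_singleton'.2 ⟨w, rfl⟩, 1 - a * w, ?_, by ring⟩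
  have : (1 : R) - a * w = -(a * w - 1) := by ring
  rw [this]; exact neg_mem h

private lemma key {R : Type*} [CommRing R] (I₁ I₂ : Ideal R) (hcomax : I₁ + I₂ = ⊤)
    (A B C D : R) (h1 : Ideal.span {A} + I₁ = ⊤)
    (h2 : Ideal.span {C} + I₂ = ⊤ ∨ Ideal.span {D} + I₂ = ⊤) :
    ∃ a b c d : R, a * d - b * c = 1 ∧ a - A ∈ I₁ ∧ b - B ∈ I₁ ∧ c - C ∈ I₂ ∧ d - D ∈ I₂ := by
  obtain ⟨v, v', β, hvv', hD⟩ :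
      ∃ v v' β : R, v * v' - 1 ∈ I₂ ∧ v' * (1 + C * β) - D ∈ I₂ := by
    rcases h2 with h | h
    · obtain ⟨C', hC'⟩ := unit_of_span h
      refine ⟨1, 1, C' * (D - 1), by simp, ?_⟩
      have : (1 : R) * (1 + C * (C' * (D - 1))) - D = (C * C' - 1) * (D - 1) := by ring
      rw [this]; exact Ideal.mul_mem_right _ _ hC'
    · obtain ⟨D', hD'⟩ := unit_of_span h
      refine ⟨D', D, 0, ?_, ?_⟩
      · have : D' * D - 1 = D * D' - 1 := by ring
        rw [this]; exact hD'
      · have : D * (1 + C * 0) - D = 0 := by ring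
        rw [this]; exact I₂.zero_mem
  obtain ⟨a, ha1, ha2⟩ := crt2 I₁ I₂ hcomax A v
  obtain ⟨u, hu⟩ := unit_of_span h1
  have hsa1 : Ideal.span {a} + I₁ = ⊤ := by
    refine span_top_of u ?_
    have : a * u - 1 = u * (a - A) + (A * u - 1) := by ring
    rw [this]; exact add_mem (I₁.mul_mem_left _ ha1) hu
  have hsa2 : Ideal.span {a} + I₂ = ⊤ := by
    refine span_top_of v' ?_
    have : a * v' - 1 = v' * (a - v) + (v * v' - 1) := by ring
    rw [this]; exact add_mem (I₂.mul_mem_left _ ha2) hvv'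
  have hc1 : IsCoprime (Ideal.span {a}) I₁ := (Ideal.isCoprime_iff_add).2 (by rw [Ideal.one_eq_top]; exact hsa1)
  have hc2 : IsCoprime (Ideal.span {a}) I₂ := (Ideal.isCoprime_iff_add).2 (by rw [Ideal.one_eq_top]; exact hsa2)
  have hcm : Ideal.span {a} + I₁ * I₂ = ⊤ := by
    rw [← Ideal.one_eq_top]; exact (Ideal.isCoprime_iff_add).1 (hc1.mul_right hc2)
  have hsa12 : Ideal.span {a} + I₁ ⊓ I₂ = ⊤ := by
    rw [eq_top_iff, ← hcm, Submodule.add_eq_sup, Submodule.add_eq_sup]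
    exact sup_le_sup le_rfl Ideal.mul_le_inf
  obtain ⟨w, hwB, hwβ⟩ := crt2 I₁ I₂ hcomax B β
  obtain ⟨b, hb1, hb2⟩ := crt2 _ _ hsa12 1 w
  have hbB : b - B ∈ I₁ := by
    have : b - B = (b - w) + (w - B) := by ring
    rw [this]; exact add_mem hb2.1 hwB
  have hbβ : b - β ∈ I₂ := by
    have : b - β = (b - w) + (w - β) := by ring
    rw [this]; exact add_mem hb2.2 hwβ
  obtain ⟨r, hr⟩ := Ideal.mem_span_singleton'.1 hb1
  -- hr : r * a = b - 1
  refine ⟨a, b, -1 + (v' * (C + 1)) * a, -r + (v' * (C + 1)) * b, by linear_combination -hr,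
    ha1, hbB, ?_, ?_⟩
  · have : (-1 + (v' * (C + 1)) * a) - C = (v' * (C + 1)) * (a - v) + (C + 1) * (v * v' - 1) := by
      ring
    rw [this]
    exact add_mem (I₂.mul_mem_left _ ha2) (I₂.mul_mem_left _ hvv')
  · have hrv : r * v - (b - 1) ∈ I₂ := by
      have : r * v - (b - 1) = -(r * (a - v)) := by linear_combination hr
      rw [this]; exact neg_mem (I₂.mul_mem_left _ ha2)
    have hvd : v * (-r + (v' * (C + 1)) * b) - (1 + C * β) ∈ I₂ := by
      have : v * (-r + (v' * (C + 1)) * b) - (1 + C * β)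
          = -(r * v - (b - 1)) + (v * v' - 1) * ((C + 1) * b) + C * (b - β) := by ring
      rw [this]
      exact add_mem (add_mem (neg_mem hrv) (Ideal.mul_mem_right _ _ hvv')) (I₂.mul_mem_left _ hbβ)
    have : (-r + (v' * (C + 1)) * b) - D
        = v' * (v * (-r + (v' * (C + 1)) * b) - (1 + C * β)) + (v' * (1 + C * β) - D)
          - (-r + (v' * (C + 1)) * b) * (v * v' - 1) := by ring
    rw [this]
    exact sub_mem (add_mem (I₂.mul_mem_left _ hvd) hD) (I₂.mul_mem_left _ hvv')

/-- Let `R` be a commutative ring with unity and `I_1, I_2` a pair of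
co-maximal ideals. Let `A, B, C, D ∈ R` with `(A) + I_1 = R` or `(B) + I_1 = R`, and
`(C) + I_2 = R` or `(D) + I_2 = R`. Then there exists a matrix `[[a,b],[c,d]] ∈ SL_2(R)`
with `a ≡ A mod I_1`, `b ≡ B mod I_1`, `c ≡ C mod I_2` and `d ≡ D mod I_2`. -/
theorem sl2_lift {R : Type*} [CommRing R] (I₁ I₂ : Ideal R) (hcomax : I₁ + I₂ = ⊤)
    (A B C D : R)
    (h1 : Ideal.span {A} + I₁ = ⊤ ∨ Ideal.span {B} + I₁ = ⊤)
    (h2 : Ideal.span {C} + I₂ = ⊤ ∨ Ideal.span {D} + I₂ = ⊤) :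
    ∃ M : Matrix.SpecialLinearGroup (Fin 2) R,
      M.1 0 0 - A ∈ I₁ ∧ M.1 0 1 - B ∈ I₁ ∧ M.1 1 0 - C ∈ I₂ ∧ M.1 1 1 - D ∈ I₂ := by
  have main : ∃ a b c d : R,
      a * d - b * c = 1 ∧ a - A ∈ I₁ ∧ b - B ∈ I₁ ∧ c - C ∈ I₂ ∧ d - D ∈ I₂ := by
    rcases h1 with hA | hB
    · exact key I₁ I₂ hcomax A B C D hA h2
    · have h2' : Ideal.span {D} + I₂ = ⊤ ∨ Ideal.span {(-C : R)} + I₂ = ⊤ := by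
        rcases h2 with h | h
        · right; rwa [Ideal.span_singleton_neg]
        · left; exact h
      obtain ⟨a', b', c', d', hdet, ha', hb', hc', hd'⟩ :=
        key I₁ I₂ hcomax B (-A) D (-C) hB h2'
      refine ⟨-b', a', -d', c', by linear_combination hdet, ?_, ha', ?_, hc'⟩
      · have : -b' - A = -(b' - -A) := by ring
        rw [this]; exact neg_mem hb'
      · have : -d' - C = -(d' - -C) := by ring
        rw [this]; exact neg_mem hd'
  obtain ⟨a, b, c, d, hdet, ha, hb, hc, hd⟩ := main
  refine ⟨⟨!![a, b; c, d], by rw [Matrix.det_fin_two_of]; linear_combination hdet⟩,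
    ?_, ?_, ?_, ?_⟩
  · simpa using ha
  · simpa using hb
  · simpa using hc
  · simpa using hd
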